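/- Let (a_k)_{k≥0} be a nondecreasing sequence in (0,1] with lim_{k→∞} a_k = 1. If there exist constants C > 0 and λ ∈ (0,1) such that 1 − a_n ≤ C λ^n for all n ≥ 0, then there exist constants C′ > 0 and λ′ ∈ (0,1) such that ρ_n ≤ C′ (λ′)^n for all n ≥ 1. -/

import Mathlib

/-!
Write `f m = a₀ ⋯ a_{m-1} (1 - a_m)` for the probability that the chain, once at `0`, climbs `m`
times and then falls back. Cutting a path with `W_{n+1} = 0` at its last zero `j ≤ n` gives the
renewal inequality `ρ_{n+1} ≤ ∑_{j ≤ n} ρ_j f(n - j)`, the two factors being independent because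
they depend on the coordinates `≤ j` and `> j` respectively. Since `f m ≤ 1 - a_m ≤ C λ^m` and
`∑ f = 1 - ∏ a_t ≤ 1 - P` with `P = inf_n ∏_{t<n} a_t > 0`, the generating function still satisfies
`∑ z^{m+1} f m ≤ 1` for some `z > 1`; strong induction then gives `ρ_n ≤ z^{-n}`.
-/

open MeasureTheory Filter

/-- House-of-cards chain: `hoc a u m k` is `W^m_{m+k}`. -/
noncomputable def hoc (a : ℕ → ℝ) (u : ℤ → ℝ) (m : ℤ) : ℕ → ℕ
  | 0 => 0
  | k + 1 => if u (m + k + 1) < a (hoc a u m k) then hoc a u m k + 1 else 0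

/-- Return probability `ρ_k := ℙ(W^0_k = 0)`. -/
noncomputable def rho (a : ℕ → ℝ) (μ : Measure (ℤ → ℝ)) (k : ℕ) : ENNReal :=
  μ {u | hoc a u 0 k = 0}

/-- The coordinates are i.i.d. uniform on `[0,1)` under `μ`. -/
def IsIIDUniform (μ : Measure (ℤ → ℝ)) : Prop :=
  ProbabilityTheory.iIndepFun
    (fun i (u : ℤ → ℝ) => u i) μ ∧
  ∀ i : ℤ, μ.map (fun u => u i) = volume.restrict (Set.Ico (0:ℝ) 1)

open ProbabilityTheory Finset Topology

lemma hoc_zero_succ (a : ℕ → ℝ) (u : ℤ → ℝ) (k : ℕ) :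
    hoc a u 0 (k + 1) = if u ↑(k + 1) < a (hoc a u 0 k) then hoc a u 0 k + 1 else 0 := by
  simp [hoc]

lemma exists_last_zero (a : ℕ → ℝ) (u : ℤ → ℝ) (k : ℕ) :
    ∃ j, j + hoc a u 0 k = k ∧ hoc a u 0 j = 0 ∧
      ∀ s < hoc a u 0 k, u ↑(j + s + 1) < a s := by
  induction k with
  | zero => exact ⟨0, rfl, rfl, fun s hs => absurd hs (Nat.not_lt_zero s)⟩
  | succ k ih =>
    obtain ⟨j, hjk, hj, hclimb⟩ := ih
    by_cases hup : u ↑(k + 1) < a (hoc a u 0 k)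
    · rw [hoc_zero_succ, if_pos hup]
      refine ⟨j, by omega, hj, fun s hs => ?_⟩
      rcases Nat.lt_succ_iff_lt_or_eq.mp hs with hs | rfl
      · exact hclimb s hs
      · rwa [hjk]
    · have hdown : hoc a u 0 (k + 1) = 0 := by rw [hoc_zero_succ, if_neg hup]
      exact ⟨k + 1, by omega, hdown, by simp [hdown]⟩

def climbSet (a : ℕ → ℝ) (m s : ℕ) : Set ℝ :=
  if s < m then Set.Iio (a s) else Set.Ici (a m)

/-- Seen from time `j`, the chain climbs at times `j + 1, …, j + m` and falls at time
`j + m + 1`. -/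
def excursion (a : ℕ → ℝ) (j m : ℕ) : Set (ℤ → ℝ) :=
  ⋂ s ∈ range (m + 1), (fun u : ℤ → ℝ => u ↑(j + s + 1)) ⁻¹' climbSet a m s

lemma measurableSet_climbSet (a : ℕ → ℝ) (m s : ℕ) : MeasurableSet (climbSet a m s) := by
  unfold climbSet
  split_ifs
  · exact measurableSet_Iio
  · exact measurableSet_Ici

/-- Probability that the chain, once at `0`, first returns to `0` after `m + 1` steps. -/
def returnProb (a : ℕ → ℝ) (m : ℕ) : ℝ := (∏ s ∈ range m, a s) * (1 - a m)

lemma returnProb_nonneg {a : ℕ → ℝ} (ha : ∀ k, a k ∈ Set.Icc (0:ℝ) 1) (m : ℕ) :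
    0 ≤ returnProb a m :=
  mul_nonneg (prod_nonneg fun s _ => (ha s).1) (sub_nonneg.2 (ha m).2)

lemma returnProb_le {a : ℕ → ℝ} (ha : ∀ k, a k ∈ Set.Icc (0:ℝ) 1) (m : ℕ) :
    returnProb a m ≤ 1 - a m :=
  mul_le_of_le_one_left (sub_nonneg.2 (ha m).2)
    (prod_le_one (fun s _ => (ha s).1) fun s _ => (ha s).2)

lemma sum_range_returnProb (a : ℕ → ℝ) (n : ℕ) :
    ∑ m ∈ range n, returnProb a m = 1 - ∏ s ∈ range n, a s := by
  induction n with
  | zero => simp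
  | succ n ih =>
    rw [sum_range_succ, ih, returnProb, prod_range_succ]
    ring

lemma setOf_hoc_succ_eq_zero_subset (a : ℕ → ℝ) (n : ℕ) :
    {u | hoc a u 0 (n + 1) = 0} ⊆
      ⋃ j ∈ range (n + 1), {u | hoc a u 0 j = 0} ∩ excursion a j (n - j) := by
  intro u hu
  obtain ⟨j, hjn, hj, hclimb⟩ := exists_last_zero a u n
  have hfall : a (hoc a u 0 n) ≤ u ↑(n + 1) := by
    by_contra! hup
    have hu : hoc a u 0 (n + 1) = 0 := hu
    rw [hoc_zero_succ, if_pos hup] at hu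
    omega
  simp only [Set.mem_iUnion, mem_range, excursion, Set.mem_inter_iff, Set.mem_iInter,
    Set.mem_preimage, climbSet]
  refine ⟨j, by omega, hj, fun s hs => ?_⟩
  rw [show n - j = hoc a u 0 n by omega]
  split_ifs with hsm
  · exact hclimb s hsm
  · obtain rfl : s = hoc a u 0 n := by omega
    rwa [hjn]

abbrev coordSigma (S : Set ℤ) : MeasurableSpace (ℤ → ℝ) :=
  ⨆ i ∈ S, MeasurableSpace.comap (fun u : ℤ → ℝ => u i) inferInstance

lemma measurable_coord_coordSigma {S : Set ℤ} {i : ℤ} (hi : i ∈ S) :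
    Measurable[coordSigma S] fun u : ℤ → ℝ => u i :=
  (comap_measurable _).mono
    (le_iSup₂ (f := fun i (_ : i ∈ S) => MeasurableSpace.comap (fun u : ℤ → ℝ => u i) _)
      i hi) le_rfl

lemma measurable_hoc_coordSigma (a : ℕ → ℝ) {j k : ℕ} (hk : k ≤ j) :
    Measurable[coordSigma (Set.Iic (j : ℤ))] fun u => hoc a u 0 k := by
  induction k with
  | zero => exact measurable_const
  | succ k ih =>
    have hstep : Measurable fun p : ℝ × ℕ => if p.1 < a p.2 then p.2 + 1 else 0 :=
      measurable_from_prod_countable_left fun m =>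
        show Measurable fun x : ℝ => if x < a m then m + 1 else 0 from
          Measurable.ite measurableSet_Iio measurable_const measurable_const
    simp only [hoc_zero_succ]
    exact hstep.comp ((measurable_coord_coordSigma (by simp only [Set.mem_Iic]; omega)).prodMk
      (ih (by omega)))

lemma measurableSet_excursion (a : ℕ → ℝ) (j m : ℕ) :
    MeasurableSet[coordSigma (Set.Ioi (j : ℤ))] (excursion a j m) := by
  refine Finset.measurableSet_biInter _ fun s _ => measurable_coord_coordSigma ?_ ?_
  · simp only [Set.mem_Ioi]; omega
  · exact measurableSet_climbSet a m s

section Probability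

variable {μ : Measure (ℤ → ℝ)}

lemma measure_coord_preimage
    (hmap : ∀ i : ℤ, μ.map (fun u => u i) = volume.restrict (Set.Ico (0:ℝ) 1))
    (i : ℤ) {s : Set ℝ} (hs : MeasurableSet s) :
    μ ((fun u : ℤ → ℝ => u i) ⁻¹' s) = volume (s ∩ Set.Ico 0 1) := by
  rw [← Measure.map_apply (measurable_pi_apply i) hs, hmap, Measure.restrict_apply hs]

lemma volume_Iio_inter_Ico {c : ℝ} (hc : c ≤ 1) :
    volume (Set.Iio c ∩ Set.Ico 0 1) = ENNReal.ofReal c := by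
  rw [Set.inter_comm, Set.Ico_inter_Iio, min_eq_right hc, Real.volume_Ico, sub_zero]

lemma volume_Ici_inter_Ico {c : ℝ} (hc : 0 ≤ c) :
    volume (Set.Ici c ∩ Set.Ico 0 1) = ENNReal.ofReal (1 - c) := by
  rw [← Set.Ici_inter_Iio, ← Set.inter_assoc, Set.Ici_inter_Ici, max_eq_left hc,
    Set.Ici_inter_Iio, Real.volume_Ico]

lemma measure_excursion (hiid : IsIIDUniform μ) {a : ℕ → ℝ}
    (ha : ∀ k, a k ∈ Set.Icc (0:ℝ) 1) (j m : ℕ) :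
    μ (excursion a j m) = ENNReal.ofReal (returnProb a m) := by
  obtain ⟨hind, hmap⟩ := hiid
  have hshift : iIndepFun (fun s (u : ℤ → ℝ) => u ↑(j + s + 1)) μ :=
    hind.precomp (g := fun s : ℕ => ((j + s + 1 : ℕ) : ℤ)) fun s t h => by simpa using h
  have hstep : ∀ s ∈ range (m + 1),
      μ ((fun u : ℤ → ℝ => u ↑(j + s + 1)) ⁻¹' climbSet a m s) =
        ENNReal.ofReal (if s < m then a s else 1 - a m) := by
    intro s _
    unfold climbSet
    split_ifs
    · rw [measure_coord_preimage hmap _ measurableSet_Iio, volume_Iio_inter_Ico (ha s).2]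
    · rw [measure_coord_preimage hmap _ measurableSet_Ici, volume_Ici_inter_Ico (ha m).1]
  rw [excursion, hshift.measure_inter_preimage_eq_mul _ fun s _ => measurableSet_climbSet a m s,
    prod_congr rfl hstep, prod_range_succ, if_neg (lt_irrefl m),
    prod_congr rfl fun s hs => by rw [if_pos (mem_range.1 hs)],
    ← ENNReal.ofReal_prod_of_nonneg fun s _ => (ha s).1,
    ← ENNReal.ofReal_mul (prod_nonneg fun s _ => (ha s).1), returnProb]

lemma measure_inter_excursion (hind : iIndepFun (fun i (u : ℤ → ℝ) => u i) μ)
    (a : ℕ → ℝ) (j m : ℕ) :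
    μ ({u | hoc a u 0 j = 0} ∩ excursion a j m) =
      μ {u | hoc a u 0 j = 0} * μ (excursion a j m) :=
  (Indep_iff _ _ _).mp
    (indep_iSup_of_disjoint (fun i => (measurable_pi_apply i).comap_le)
      ((iIndepFun_iff_iIndep _ _ _).mp hind) (Set.Iic_disjoint_Ioi le_rfl))
    _ _ (measurable_hoc_coordSigma a le_rfl (measurableSet_singleton 0))
    (measurableSet_excursion a j m)

lemma measureReal_hoc_succ_eq_zero_le [IsProbabilityMeasure μ] (hiid : IsIIDUniform μ)
    {a : ℕ → ℝ} (ha : ∀ k, a k ∈ Set.Icc (0:ℝ) 1) (n : ℕ) :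
    μ.real {u | hoc a u 0 (n + 1) = 0} ≤
      ∑ j ∈ range (n + 1), μ.real {u | hoc a u 0 j = 0} * returnProb a (n - j) :=
  calc μ.real {u | hoc a u 0 (n + 1) = 0}
      ≤ μ.real (⋃ j ∈ range (n + 1), {u | hoc a u 0 j = 0} ∩ excursion a j (n - j)) :=
        measureReal_mono (setOf_hoc_succ_eq_zero_subset a n) (measure_ne_top μ _)
    _ ≤ ∑ j ∈ range (n + 1), μ.real ({u | hoc a u 0 j = 0} ∩ excursion a j (n - j)) :=
        measureReal_biUnion_finset_le _ _
    _ = _ := sum_congr rfl fun j _ => by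
        rw [measureReal_def, measure_inter_excursion hiid.1, measure_excursion hiid ha,
          ENNReal.toReal_mul, ENNReal.toReal_ofReal (returnProb_nonneg ha _), measureReal_def]

end Probability

lemma exp_neg_le_prod_range {a : ℕ → ℝ} {δ C l : ℝ} (hδ : 0 < δ) (hδa : ∀ t, δ ≤ a t)
    (ha1 : ∀ t, a t ≤ 1) (hl0 : 0 ≤ l) (hl1 : l < 1) (hexp : ∀ t, 1 - a t ≤ C * l ^ t)
    (n : ℕ) : Real.exp (-(C / (δ * (1 - l)))) ≤ ∏ t ∈ range n, a t := by
  have hC : 0 ≤ C := by simpa using (sub_nonneg.2 (ha1 0)).trans (hexp 0)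
  have hlog : ∀ t, -(C / δ * l ^ t) ≤ Real.log (a t) := fun t =>
    calc -(C / δ * l ^ t) ≤ -((1 - a t) / a t) := by
          rw [neg_le_neg_iff, div_mul_eq_mul_div]
          calc (1 - a t) / a t ≤ (1 - a t) / δ :=
                div_le_div_of_nonneg_left (sub_nonneg.2 (ha1 t)) hδ (hδa t)
            _ ≤ C * l ^ t / δ := div_le_div_of_nonneg_right (hexp t) hδ.le
      _ = 1 - (a t)⁻¹ := by field_simp [(hδ.trans_le (hδa t)).ne']; ring
      _ ≤ Real.log (a t) := Real.one_sub_inv_le_log_of_pos (hδ.trans_le (hδa t))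
  have hgeom : ∑ t ∈ range n, l ^ t ≤ (1 - l)⁻¹ := by
    simpa using geom_sum_Ico_le_of_lt_one (m := 0) (n := n) hl0 hl1
  calc Real.exp (-(C / (δ * (1 - l))))
      ≤ Real.exp (∑ t ∈ range n, -(C / δ * l ^ t)) := by
        rw [Real.exp_le_exp, sum_neg_distrib, ← mul_sum, neg_le_neg_iff, div_mul_eq_div_div,
          div_eq_mul_inv _ (1 - l)]
        gcongr
    _ ≤ Real.exp (∑ t ∈ range n, Real.log (a t)) := by gcongr with t; exact hlog t
    _ = ∏ t ∈ range n, a t := by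
        rw [Real.exp_sum]
        exact prod_congr rfl fun t _ => Real.exp_log (hδ.trans_le (hδa t))

lemma exists_one_lt_forall_sum_pow_mul_le_one {g : ℕ → ℝ} {C l P : ℝ}
    (hg0 : ∀ m, 0 ≤ g m) (hgC : ∀ m, g m ≤ C * l ^ m) (hl0 : 0 ≤ l) (hl1 : l < 1) (hP : 0 < P)
    (hsum : ∀ n, ∑ m ∈ range n, g m ≤ 1 - P) :
    ∃ z, 1 < z ∧ ∀ n, ∑ m ∈ range n, z ^ (m + 1) * g m ≤ 1 := by
  have hC : 0 ≤ C := by simpa using (hg0 0).trans (hgC 0)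
  -- The extra mass `∑ (z^{m+1} - 1) C l^m = C (z / (1 - z l) - 1 / (1 - l))` vanishes at `z = 1`.
  have hnear : ∀ᶠ z in 𝓝 (1 : ℝ),
      z * l < 1 ∧ C * (z * (1 - z * l)⁻¹) < C * (1 - l)⁻¹ + P := by
    have h1l : (1 : ℝ) - 1 * l ≠ 0 := by linarith
    refine (ContinuousAt.eventually_lt (by fun_prop) continuousAt_const (by simpa using hl1)).and
      (ContinuousAt.eventually_lt (by fun_prop (disch := exact h1l)) continuousAt_const ?_)
    simpa using hP
  obtain ⟨z, hz1, hzl, hzC⟩ := hnear.exists_gt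
  refine ⟨z, hz1, fun n => ?_⟩
  have hgeom :
      HasSum (fun m => (z ^ (m + 1) - 1) * l ^ m) (z * (1 - z * l)⁻¹ - (1 - l)⁻¹) :=
    (((hasSum_geometric_of_lt_one (by positivity) hzl).mul_left z).sub
      (hasSum_geometric_of_lt_one hl0 hl1)).congr_fun fun m => by ring
  have hpow : ∀ m, 0 ≤ z ^ (m + 1) - 1 := fun m => sub_nonneg.2 (one_le_pow₀ hz1.le)
  calc ∑ m ∈ range n, z ^ (m + 1) * g m
      = ∑ m ∈ range n, g m + ∑ m ∈ range n, (z ^ (m + 1) - 1) * g m := by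
        rw [← sum_add_distrib]
        exact sum_congr rfl fun m _ => by ring
    _ ≤ (1 - P) + C * ∑ m ∈ range n, (z ^ (m + 1) - 1) * l ^ m := by
        rw [mul_sum]
        refine add_le_add (hsum n) (sum_le_sum fun m _ => ?_)
        calc (z ^ (m + 1) - 1) * g m ≤ (z ^ (m + 1) - 1) * (C * l ^ m) :=
              mul_le_mul_of_nonneg_left (hgC m) (hpow m)
          _ = C * ((z ^ (m + 1) - 1) * l ^ m) := by ring
    _ ≤ (1 - P) + C * (z * (1 - z * l)⁻¹ - (1 - l)⁻¹) := by
        gcongr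
        exact sum_le_hasSum _ (fun m _ => mul_nonneg (hpow m) (pow_nonneg hl0 m)) hgeom
    _ ≤ 1 := by linarith

lemma le_inv_pow_of_le_sum_mul {r g : ℕ → ℝ} {z : ℝ} (hz : 0 < z) (hg : ∀ m, 0 ≤ g m)
    (hgz : ∀ n, ∑ m ∈ range n, z ^ (m + 1) * g m ≤ 1) (hr0 : r 0 ≤ 1)
    (hr : ∀ n, r (n + 1) ≤ ∑ j ∈ range (n + 1), r j * g (n - j)) (n : ℕ) :
    r n ≤ z⁻¹ ^ n := by
  induction n using Nat.strong_induction_on with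
  | _ n ih =>
    cases n with
    | zero => simpa using hr0
    | succ n =>
      calc r (n + 1) ≤ ∑ j ∈ range (n + 1), z⁻¹ ^ j * g (n - j) :=
            (hr n).trans (sum_le_sum fun j hj =>
              mul_le_mul_of_nonneg_right (ih j (mem_range.1 hj)) (hg _))
        _ = z⁻¹ ^ (n + 1) * ∑ j ∈ range (n + 1), z ^ (n - j + 1) * g (n - j) := by
            rw [mul_sum]
            refine sum_congr rfl fun j hj => ?_
            obtain ⟨k, rfl⟩ : ∃ k, n = j + k := ⟨n - j, by have := mem_range.1 hj; omega⟩
            rw [Nat.add_sub_cancel_left, ← mul_assoc, show j + k + 1 = j + (k + 1) by ring,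
              pow_add, mul_assoc (z⁻¹ ^ j), inv_pow z (k + 1), inv_mul_cancel₀ (by positivity),
              mul_one]
        _ = z⁻¹ ^ (n + 1) * ∑ m ∈ range (n + 1), z ^ (m + 1) * g m := by
            rw [← sum_range_reflect (fun m => z ^ (m + 1) * g m)]
            simp
        _ ≤ z⁻¹ ^ (n + 1) := mul_le_of_le_one_right (by positivity) (hgz _)

theorem stmt8_general (a : ℕ → ℝ) (ha : ∀ k, a k ∈ Set.Ioc (0:ℝ) 1) (hmono : Monotone a)
    (μ : Measure (ℤ → ℝ)) [IsProbabilityMeasure μ] (hiid : IsIIDUniform μ)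
    (C : ℝ) (l : ℝ) (hl : l ∈ Set.Ioo (0:ℝ) 1)
    (hexp : ∀ n : ℕ, 1 - a n ≤ C * l ^ n) :
    ∃ C' : ℝ, 0 < C' ∧ ∃ l' ∈ Set.Ioo (0:ℝ) 1,
      ∀ n : ℕ, 1 ≤ n → rho a μ n ≤ ENNReal.ofReal (C' * l' ^ n) := by
  have ha' : ∀ k, a k ∈ Set.Icc (0:ℝ) 1 := fun k => Set.Ioc_subset_Icc_self (ha k)
  have hprod := exp_neg_le_prod_range (ha 0).1 (fun t => hmono t.zero_le) (fun t => (ha t).2)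
    hl.1.le hl.2 hexp
  obtain ⟨z, hz1, hz⟩ := exists_one_lt_forall_sum_pow_mul_le_one (returnProb_nonneg ha')
    (fun m => (returnProb_le ha' m).trans (hexp m)) hl.1.le hl.2 (Real.exp_pos _)
    fun n => by rw [sum_range_returnProb]; linarith [hprod n]
  have hρ := le_inv_pow_of_le_sum_mul (r := fun n => μ.real {u | hoc a u 0 n = 0})
    (zero_lt_one.trans hz1) (returnProb_nonneg ha') hz
    measureReal_le_one (measureReal_hoc_succ_eq_zero_le hiid ha')
  refine ⟨1, one_pos, z⁻¹, ⟨by positivity, inv_lt_one_of_one_lt₀ hz1⟩, fun n _ => ?_⟩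
  rw [one_mul, rho, ENNReal.le_ofReal_iff_toReal_le (measure_ne_top _ _) (by positivity)]
  exact hρ n

/-- if `1 - a_n` decreases exponentially then so does `ρ_n`. -/
theorem stmt8 (a : ℕ → ℝ) (ha : ∀ k, a k ∈ Set.Ioc (0:ℝ) 1) (hmono : Monotone a)
    (hlim : Tendsto a atTop (nhds 1))
    (μ : Measure (ℤ → ℝ)) [IsProbabilityMeasure μ] (hiid : IsIIDUniform μ)
    (C : ℝ) (hC : 0 < C) (l : ℝ) (hl : l ∈ Set.Ioo (0:ℝ) 1)
    (hexp : ∀ n : ℕ, 1 - a n ≤ C * l ^ n) :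
    ∃ C' : ℝ, 0 < C' ∧ ∃ l' ∈ Set.Ioo (0:ℝ) 1,
      ∀ n : ℕ, 1 ≤ n → rho a μ n ≤ ENNReal.ofReal (C' * l' ^ n) :=
  stmt8_general a ha hmono μ hiid C l hl hexp
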